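/- arXiv:2404.06131 — 12 statements merged into one kernel-verified Lean document; each statement's English description precedes it below -/
import Mathlib

section
/- Given a reflexive Kripke frame (W,R) and a ±-path π : [0;ℓ] → W, there exists an up-down path π' : [0;ℓ'] → W (a ±-path of even length 2h such that R(π'(2i), π'(2i+1)) and R(π'(2i+2), π'(2i+1)) for all i < h) and a total, surjective, monotone non-decreasing function f : [0;ℓ'] → [0;ℓ] such that π'(j) = π(f(j)) for all j ∈ [0;ℓ']. -/
/-- `R±`: the symmetric closure of the accessibility relation `R`. -/
def RelPM {W : Type*} (R : W → W → Prop) (x y : W) : Prop := R x y ∨ R y x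

/-- An undirected path of length `ℓ` in the Kripke frame `(W, R)`. -/
def UPath {W : Type*} (R : W → W → Prop) (π : ℕ → W) (ℓ : ℕ) : Prop :=
  ∀ i < ℓ, RelPM R (π i) (π (i + 1))

/-- A `↓`-path: an undirected path of length `ℓ ≥ 1` with `R (π ℓ) (π (ℓ-1))`. -/
def DownPath {W : Type*} (R : W → W → Prop) (π : ℕ → W) (ℓ : ℕ) : Prop :=
  1 ≤ ℓ ∧ UPath R π ℓ ∧ R (π ℓ) (π (ℓ - 1))

/-- A `±`-path: a `↓`-path of length `ℓ ≥ 2` with `R (π 0) (π 1)`. -/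
def PMPath {W : Type*} (R : W → W → Prop) (π : ℕ → W) (ℓ : ℕ) : Prop :=
  2 ≤ ℓ ∧ DownPath R π ℓ ∧ R (π 0) (π 1)

/-- An up-down path of length `2h`, `h ≥ 1`: a `±`-path that alternates
strictly up then down at each pair of steps. -/
def UpDownPath {W : Type*} (R : W → W → Prop) (π : ℕ → W) (h : ℕ) : Prop :=
  1 ≤ h ∧ PMPath R π (2 * h) ∧
    ∀ i < h, R (π (2 * i)) (π (2 * i + 1)) ∧ R (π (2 * i + 2)) (π (2 * i + 1))

/-!
Each step `π i — π (i+1)` of an undirected path is split into two steps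
`π i, m, π (i+1)` whose midpoint `m` is `π (i+1)` if the step goes up and `π i` otherwise;
by reflexivity one of the two new steps is a loop, so the result goes up then down.
The reparametrisation sends `2i ↦ i` and `2i+1` to the index of the midpoint.
-/

theorem UpDownPath.of_forall_up_down {W : Type*} {R : W → W → Prop} {π : ℕ → W} {h : ℕ}
    (hh : 1 ≤ h)
    (hstep : ∀ i < h, R (π (2 * i)) (π (2 * i + 1)) ∧ R (π (2 * i + 2)) (π (2 * i + 1))) :
    UpDownPath R π h := by
  refine ⟨hh, ⟨by omega, ⟨by omega, fun j hj => ?_, ?_⟩, by simpa using (hstep 0 hh).1⟩, hstep⟩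
  · obtain ⟨i, rfl | rfl⟩ := Nat.even_or_odd' j
    · exact .inl (hstep i (by omega)).1
    · exact .inr (hstep i (by omega)).2
  · have := (hstep (h - 1) (by omega)).2
    rwa [show 2 * (h - 1) + 2 = 2 * h by omega, show 2 * (h - 1) + 1 = 2 * h - 1 by omega]
      at this

section UpDownIndex

open scoped Classical

variable {W : Type*} (R : W → W → Prop) (π : ℕ → W)

noncomputable def upDownIndex (j : ℕ) : ℕ :=
  if j % 2 = 1 ∧ R (π (j / 2)) (π (j / 2 + 1)) then j / 2 + 1 else j / 2

@[simp]
theorem upDownIndex_two_mul (i : ℕ) : upDownIndex R π (2 * i) = i := by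
  simp [upDownIndex]

theorem upDownIndex_two_mul_add_one (i : ℕ) :
    upDownIndex R π (2 * i + 1) = if R (π i) (π (i + 1)) then i + 1 else i := by
  simp [upDownIndex, show (2 * i + 1) / 2 = i by omega]

theorem monotone_upDownIndex : Monotone (upDownIndex R π) := by
  have hbounds : ∀ j, j / 2 ≤ upDownIndex R π j ∧ upDownIndex R π j ≤ (j + 1) / 2 := by
    intro j
    unfold upDownIndex
    split_ifs <;> omega
  intro j k hjk
  rcases hjk.eq_or_lt with rfl | hlt
  · exact le_rfl
  · have := (hbounds j).2
    have := (hbounds k).1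
    omega

variable {R π}

theorem UPath.up_down_upDownIndex (hrefl : ∀ w, R w w) {ℓ : ℕ} (hπ : UPath R π ℓ)
    {i : ℕ} (hi : i < ℓ) :
    R (π (upDownIndex R π (2 * i))) (π (upDownIndex R π (2 * i + 1))) ∧
      R (π (upDownIndex R π (2 * i + 2))) (π (upDownIndex R π (2 * i + 1))) := by
  rw [show 2 * i + 2 = 2 * (i + 1) by ring, upDownIndex_two_mul, upDownIndex_two_mul,
    upDownIndex_two_mul_add_one]
  split_ifs with hup
  · exact ⟨hup, hrefl _⟩
  · exact ⟨hrefl _, (hπ i hi).resolve_left hup⟩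

theorem UPath.upDownPath_comp_upDownIndex (hrefl : ∀ w, R w w) {ℓ : ℕ} (hπ : UPath R π ℓ)
    (hℓ : 1 ≤ ℓ) : UpDownPath R (π ∘ upDownIndex R π) ℓ :=
  .of_forall_up_down hℓ fun _ hi => hπ.up_down_upDownIndex hrefl hi

end UpDownIndex

/-- In a reflexive Kripke frame, every `±`-path can be turned into an up-down
path visiting the same points in the same order. -/
theorem pmPath_to_upDownPath {W : Type*} (R : W → W → Prop)
    (hrefl : ∀ w, R w w) (π : ℕ → W) (ℓ : ℕ) (hπ : PMPath R π ℓ) :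
    ∃ (π' : ℕ → W) (h : ℕ) (f : ℕ → ℕ),
      UpDownPath R π' h ∧
      (∀ j ≤ 2 * h, f j ≤ ℓ) ∧
      (∀ i ≤ ℓ, ∃ j ≤ 2 * h, f j = i) ∧
      (∀ j k, j ≤ k → k ≤ 2 * h → f j ≤ f k) ∧
      (∀ j ≤ 2 * h, π' j = π (f j)) := by
  obtain ⟨-, ⟨hℓ, hpath, -⟩, -⟩ := hπ
  have hmono := monotone_upDownIndex R π
  refine ⟨π ∘ upDownIndex R π, ℓ, upDownIndex R π,
    hpath.upDownPath_comp_upDownIndex hrefl hℓ, fun j hj => ?_,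
    fun i _ => ⟨2 * i, by omega, upDownIndex_two_mul R π i⟩,
    fun j k hjk _ => hmono hjk, fun _ _ => rfl⟩
  simpa using hmono hj
end

section
/- Given a reflexive Kripke frame (W,R) and a down-path π : [0;ℓ] → W (ℓ ≥ 1), there exists an up-down path π' : [0;2h] → W and a total, surjective, monotone non-decreasing function f : [0;2h] → [0;ℓ] such that π'(j) = π(f(j)) for all j ∈ [0;2h]. -/
/-! Reflexivity lets every step `π i — π (i+1)` be replaced by an up-step followed by a
down-step through its upper endpoint: `π i, π (i+1), π (i+1)` when `R (π i) (π (i+1))`, and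
`π i, π i, π (i+1)` otherwise, one of the two new steps being a loop. The resulting path of
length `2ℓ` is up-down and revisits the points of `π` in order. -/

theorem UpDownPath.of_alternating {W : Type*} {R : W → W → Prop} {π : ℕ → W} {h : ℕ}
    (hh : 1 ≤ h)
    (halt : ∀ i < h, R (π (2 * i)) (π (2 * i + 1)) ∧ R (π (2 * i + 2)) (π (2 * i + 1))) :
    UpDownPath R π h := by
  have hpath : UPath R π (2 * h) := by
    intro j hj
    obtain ⟨i, rfl | rfl⟩ := Nat.even_or_odd' j
    · exact Or.inl (halt i (by omega)).1
    · exact Or.inr (halt i (by omega)).2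
  have hlast : R (π (2 * h)) (π (2 * h - 1)) := by
    obtain ⟨k, rfl⟩ : ∃ k, h = k + 1 := ⟨h - 1, by omega⟩
    exact (halt k (by omega)).2
  exact ⟨hh, ⟨by omega, ⟨by omega, hpath, hlast⟩, (halt 0 hh).1⟩, halt⟩

section Doubling

variable {W : Type*} (R : W → W → Prop) (π : ℕ → W)

noncomputable def doublingIndex (j : ℕ) : ℕ := by
  classical
  exact if Even j then j / 2 else if R (π (j / 2)) (π (j / 2 + 1)) then j / 2 + 1 else j / 2

@[simp]
theorem doublingIndex_two_mul (i : ℕ) : doublingIndex R π (2 * i) = i := by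
  simp [doublingIndex]

theorem doublingIndex_two_mul_add_one_of_rel {i : ℕ} (hup : R (π i) (π (i + 1))) :
    doublingIndex R π (2 * i + 1) = i + 1 := by
  have : (2 * i + 1) / 2 = i := by omega
  simp [doublingIndex, this, hup]

theorem doublingIndex_two_mul_add_one_of_not_rel {i : ℕ} (hup : ¬R (π i) (π (i + 1))) :
    doublingIndex R π (2 * i + 1) = i := by
  have : (2 * i + 1) / 2 = i := by omega
  simp [doublingIndex, this, hup]

theorem doublingIndex_mem_Icc (j : ℕ) : doublingIndex R π j ∈ Set.Icc (j / 2) ((j + 1) / 2) := by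
  unfold doublingIndex
  split_ifs with hj <;> simp only [Nat.even_iff] at hj <;> constructor <;> omega

theorem monotone_doublingIndex : Monotone (doublingIndex R π) := by
  intro j k hjk
  rcases hjk.eq_or_lt with rfl | hlt
  · exact le_rfl
  · calc doublingIndex R π j ≤ (j + 1) / 2 := (doublingIndex_mem_Icc R π j).2
      _ ≤ k / 2 := by omega
      _ ≤ doublingIndex R π k := (doublingIndex_mem_Icc R π k).1

theorem doublingIndex_le {ℓ j : ℕ} (hj : j ≤ 2 * ℓ) : doublingIndex R π j ≤ ℓ :=
  (monotone_doublingIndex R π hj).trans (doublingIndex_two_mul R π ℓ).le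

theorem up_down_comp_doublingIndex (hrefl : ∀ w, R w w) {i : ℕ} (hi : RelPM R (π i) (π (i + 1))) :
    R (π (doublingIndex R π (2 * i))) (π (doublingIndex R π (2 * i + 1))) ∧
      R (π (doublingIndex R π (2 * i + 2))) (π (doublingIndex R π (2 * i + 1))) := by
  rw [show 2 * i + 2 = 2 * (i + 1) by ring, doublingIndex_two_mul, doublingIndex_two_mul]
  by_cases hup : R (π i) (π (i + 1))
  · rw [doublingIndex_two_mul_add_one_of_rel R π hup]
    exact ⟨hup, hrefl _⟩
  · rw [doublingIndex_two_mul_add_one_of_not_rel R π hup]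
    exact ⟨hrefl _, hi.resolve_left hup⟩

theorem upDownPath_comp_doublingIndex (hrefl : ∀ w, R w w) {ℓ : ℕ} (hℓ : 1 ≤ ℓ)
    (hπ : UPath R π ℓ) : UpDownPath R (π ∘ doublingIndex R π) ℓ :=
  .of_alternating hℓ fun i hi => up_down_comp_doublingIndex R π hrefl (hπ i hi)

end Doubling

/-- In a reflexive Kripke frame, every `↓`-path can be turned into an up-down
path visiting the same points in the same order. -/
theorem downPath_to_upDownPath {W : Type*} (R : W → W → Prop)
    (hrefl : ∀ w, R w w) (π : ℕ → W) (ℓ : ℕ) (hπ : DownPath R π ℓ) :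
    ∃ (π' : ℕ → W) (h : ℕ) (f : ℕ → ℕ),
      UpDownPath R π' h ∧
      (∀ j ≤ 2 * h, f j ≤ ℓ) ∧
      (∀ i ≤ ℓ, ∃ j ≤ 2 * h, f j = i) ∧
      (∀ j k, j ≤ k → k ≤ 2 * h → f j ≤ f k) ∧
      (∀ j ≤ 2 * h, π' j = π (f j)) := by
  obtain ⟨hℓ, hpath, -⟩ := hπ
  refine ⟨π ∘ doublingIndex R π, ℓ, doublingIndex R π,
    upDownPath_comp_doublingIndex R π hrefl hℓ hpath, fun j hj => doublingIndex_le R π hj,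
    fun i hi => ⟨2 * i, by omega, doublingIndex_two_mul R π i⟩,
    fun j k hjk _ => monotone_doublingIndex R π hjk, fun j _ => rfl⟩
end

section
/- Let 𝒫 = (|K|, V) be a polyhedral model, x ∈ |K|, and Φ an SLCS_η formula. Then 𝒫, x ⊨ Φ if and only if 𝒫, x ⊨ ℰ(Φ), where ℰ is the encoding of SLCS_η into SLCS_γ defined by ℰ(p) = p, ℰ(¬Φ) = ¬ℰ(Φ), ℰ(Φ₁ ∧ Φ₂) = ℰ(Φ₁) ∧ ℰ(Φ₂), and ℰ(η(Φ₁,Φ₂)) = ℰ(Φ₁) ∧ γ(ℰ(Φ₁), ℰ(Φ₂)). -/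
open Geometry unitInterval

/-- Formulas of `SLCS_γ`. -/
inductive SLCSg (PL : Type*) : Type _
  | prop (p : PL)
  | neg (φ : SLCSg PL)
  | and (φ ψ : SLCSg PL)
  | gamma (φ ψ : SLCSg PL)

/-- Formulas of `SLCS_η`. -/
inductive SLCSe (PL : Type*) : Type _
  | prop (p : PL)
  | neg (φ : SLCSe PL)
  | and (φ ψ : SLCSe PL)
  | eta (φ ψ : SLCSe PL)

/-- The (open) cell of a simplex `s`: the relative interior of its convex hull. -/
def cellOf {m : ℕ} (s : Finset (EuclideanSpace ℝ (Fin m))) :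
    Set (EuclideanSpace ℝ (Fin m)) :=
  intrinsicInterior ℝ (convexHull ℝ (s : Set (EuclideanSpace ℝ (Fin m))))

/-- A polyhedral model: a simplicial complex `K` in `ℝᵐ` together with a
valuation assigning to each proposition letter a union of cells of `K`. -/
structure PolyModel (m : ℕ) (PL : Type*) where
  K : SimplicialComplex ℝ (EuclideanSpace ℝ (Fin m))
  V : PL → Set (EuclideanSpace ℝ (Fin m))
  V_cells : ∀ p, ∃ S ⊆ K.faces, V p = ⋃ s ∈ S, cellOf s

/-- The points of the polyhedron `|K|` of a polyhedral model. -/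
abbrev PolyModel.Pt {m : ℕ} {PL : Type*} (M : PolyModel m PL) : Type _ :=
  {x : EuclideanSpace ℝ (Fin m) // x ∈ M.K.space}

/-- Satisfaction of `SLCS_γ` formulas on a polyhedral model: for `γ(φ,ψ)`,
the intermediate points of a witnessing topological path (those in `(0,1)`)
must satisfy `φ`, and its endpoint must satisfy `ψ`. -/
def PolyModel.satG {m : ℕ} {PL : Type*} (M : PolyModel m PL) :
    SLCSg PL → M.Pt → Prop
  | .prop p, x => (x : EuclideanSpace ℝ (Fin m)) ∈ M.V p
  | .neg φ, x => ¬ M.satG φ x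
  | .and φ ψ, x => M.satG φ x ∧ M.satG ψ x
  | .gamma φ ψ, x =>
      ∃ π : unitInterval → M.Pt, Continuous π ∧ π 0 = x ∧ M.satG ψ (π 1) ∧
        ∀ r : unitInterval, 0 < (r : ℝ) → (r : ℝ) < 1 → M.satG φ (π r)

/-- Satisfaction of `SLCS_η` formulas on a polyhedral model: for `η(φ,ψ)`,
all points of a witnessing topological path except its endpoint (those in
`[0,1)`, including the starting point) must satisfy `φ`, and its endpoint must
satisfy `ψ`. -/
def PolyModel.satE {m : ℕ} {PL : Type*} (M : PolyModel m PL) :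
    SLCSe PL → M.Pt → Prop
  | .prop p, x => (x : EuclideanSpace ℝ (Fin m)) ∈ M.V p
  | .neg φ, x => ¬ M.satE φ x
  | .and φ ψ, x => M.satE φ x ∧ M.satE ψ x
  | .eta φ ψ, x =>
      ∃ π : unitInterval → M.Pt, Continuous π ∧ π 0 = x ∧ M.satE ψ (π 1) ∧
        ∀ r : unitInterval, (r : ℝ) < 1 → M.satE φ (π r)

/-- The encoding `ℰ` of `SLCS_η` into `SLCS_γ`. -/
def enc {PL : Type*} : SLCSe PL → SLCSg PL
  | .prop p => .prop p
  | .neg φ => .neg (enc φ)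
  | .and φ ψ => .and (enc φ) (enc ψ)
  | .eta φ ψ => .and (enc φ) (.gamma (enc φ) (enc ψ))

/-! The two path modalities differ only at the starting point `π 0 = x`, which `η` constrains and
`γ` does not; conjoining `ℰ(Φ₁)` at `x` restores it. -/

theorem unitInterval.forall_lt_one_iff {P : I → Prop} :
    (∀ r : I, (r : ℝ) < 1 → P r) ↔ P 0 ∧ ∀ r : I, 0 < (r : ℝ) → (r : ℝ) < 1 → P r := by
  refine ⟨fun h => ⟨h 0 (by norm_num), fun r _ hr => h r hr⟩, fun ⟨h0, h⟩ r hr => ?_⟩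
  rcases eq_or_lt_of_le r.2.1 with hr0 | hr0
  · rwa [show r = 0 from Subtype.ext hr0.symm]
  · exact h r hr0 hr

theorem exists_path_forall_lt_one_iff {X : Type*} [TopologicalSpace X] (P Q : X → Prop) (x : X) :
    (∃ π : I → X, Continuous π ∧ π 0 = x ∧ Q (π 1) ∧ ∀ r : I, (r : ℝ) < 1 → P (π r)) ↔
      P x ∧ ∃ π : I → X, Continuous π ∧ π 0 = x ∧ Q (π 1) ∧
        ∀ r : I, 0 < (r : ℝ) → (r : ℝ) < 1 → P (π r) := by
  simp only [unitInterval.forall_lt_one_iff]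
  constructor
  · rintro ⟨π, hπ, rfl, hQ, hP0, hP⟩
    exact ⟨hP0, π, hπ, rfl, hQ, hP⟩
  · rintro ⟨hx, π, hπ, rfl, hQ, hP⟩
    exact ⟨π, hπ, rfl, hQ, hx, hP⟩

/-- A point of a polyhedral model satisfies an `SLCS_η` formula `Φ` iff it
satisfies the `SLCS_γ` formula `ℰ(Φ)`. -/
theorem poly_satE_iff_satG_enc {m : ℕ} {PL : Type*} (M : PolyModel m PL)
    (x : M.Pt) (Φ : SLCSe PL) :
    M.satE Φ x ↔ M.satG (enc Φ) x := by
  induction Φ generalizing x with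
  | prop p => rfl
  | neg φ ih => simp only [PolyModel.satE, enc, PolyModel.satG, ih]
  | and φ ψ ih₁ ih₂ => simp only [PolyModel.satE, enc, PolyModel.satG, ih₁, ih₂]
  | eta φ ψ ih₁ ih₂ =>
    simp only [PolyModel.satE, enc, PolyModel.satG, ih₁, ih₂]
    exact exists_path_forall_lt_one_iff _ _ x
end

section
/- Let 𝒫 = (|K|, V) be a polyhedral model. For all x₁, x₂ ∈ |K|: if x₁ and x₂ satisfy the same SLCS_γ formulas, then x₁ and x₂ satisfy the same SLCS_η formulas. -/
/-!
`η(φ, ψ)` differs from `γ(φ, ψ)` only in also demanding `φ` at the start `π 0 = x` of the path,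
so `η(φ, ψ)` is equivalent to `φ ∧ γ(φ, ψ)`. Translating every `SLCS_η` formula this way gives an
equivalent `SLCS_γ` formula, and `SLCS_γ`-equivalent points therefore agree on it.
-/

open Geometry unitInterval

def SLCSe.toSLCSg {PL : Type*} : SLCSe PL → SLCSg PL
  | .prop p => .prop p
  | .neg φ => .neg φ.toSLCSg
  | .and φ ψ => .and φ.toSLCSg ψ.toSLCSg
  | .eta φ ψ => .and φ.toSLCSg (.gamma φ.toSLCSg ψ.toSLCSg)

theorem PolyModel.satE_iff_satG_toSLCSg {m : ℕ} {PL : Type*} (M : PolyModel m PL)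
    (Φ : SLCSe PL) (x : M.Pt) : M.satE Φ x ↔ M.satG Φ.toSLCSg x := by
  induction Φ generalizing x with
  | prop p => rfl
  | neg φ ih => simp only [satE, satG, SLCSe.toSLCSg, ih]
  | and φ ψ ihφ ihψ => simp only [satE, satG, SLCSe.toSLCSg, ihφ, ihψ]
  | eta φ ψ ihφ ihψ =>
    simp only [satE, satG, SLCSe.toSLCSg, ihφ, ihψ]
    exact exists_path_forall_lt_one_iff _ _ x

/-- On polyhedral models, `SLCS_γ` logical equivalence implies `SLCS_η`
logical equivalence. -/
theorem poly_satG_equiv_implies_satE_equiv {m : ℕ} {PL : Type*}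
    (M : PolyModel m PL) (x₁ x₂ : M.Pt)
    (h : ∀ Φ : SLCSg PL, M.satG Φ x₁ ↔ M.satG Φ x₂) :
    ∀ Φ : SLCSe PL, M.satE Φ x₁ ↔ M.satE Φ x₂ := by
  intro Φ
  rw [M.satE_iff_satG_toSLCSg, M.satE_iff_satG_toSLCSg]
  exact h Φ.toSLCSg
end

section
/- Let ℱ = (W, ≼, 𝒱) be a finite poset model, w ∈ W, and Φ an SLCS_η formula. Then ℱ, w ⊨ Φ if and only if ℱ, w ⊨ ℰ(Φ), where ℰ(p) = p, ℰ(¬Φ) = ¬ℰ(Φ), ℰ(Φ₁∧Φ₂) = ℰ(Φ₁)∧ℰ(Φ₂), and ℰ(η(Φ₁,Φ₂)) = ℰ(Φ₁) ∧ γ(ℰ(Φ₁), ℰ(Φ₂)). -/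
/-- An undirected path of length `ℓ` in a poset: consecutive elements comparable. -/
def PosetUPath {W : Type*} [PartialOrder W] (π : ℕ → W) (ℓ : ℕ) : Prop :=
  ∀ i < ℓ, π i ≤ π (i + 1) ∨ π (i + 1) ≤ π i

/-- A `↓`-path in a poset: an undirected path of length `ℓ ≥ 1` with `π ℓ ≼ π (ℓ-1)`. -/
def PosetDownPath {W : Type*} [PartialOrder W] (π : ℕ → W) (ℓ : ℕ) : Prop :=
  1 ≤ ℓ ∧ PosetUPath π ℓ ∧ π ℓ ≤ π (ℓ - 1)

/-- A `±`-path in a poset: a `↓`-path of length `ℓ ≥ 2` with `π 0 ≼ π 1`. -/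
def PosetPMPath {W : Type*} [PartialOrder W] (π : ℕ → W) (ℓ : ℕ) : Prop :=
  2 ≤ ℓ ∧ PosetDownPath π ℓ ∧ π 0 ≤ π 1

/-- Satisfaction of `SLCS_γ` formulas on a poset model, via `±`-paths:
intermediate points (strictly between start and end) must satisfy `φ`. -/
def satG {W PL : Type*} [PartialOrder W] (V : PL → Set W) : SLCSg PL → W → Prop
  | .prop p, w => w ∈ V p
  | .neg φ, w => ¬ satG V φ w
  | .and φ ψ, w => satG V φ w ∧ satG V ψ w
  | .gamma φ ψ, w =>
      ∃ (π : ℕ → W) (ℓ : ℕ), PosetPMPath π ℓ ∧ π 0 = w ∧ satG V ψ (π ℓ) ∧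
        ∀ i, 0 < i → i < ℓ → satG V φ (π i)

/-- Satisfaction of `SLCS_η` formulas on a poset model, via `±`-paths:
all points except the endpoint (including the start) must satisfy `φ`. -/
def satE {W PL : Type*} [PartialOrder W] (V : PL → Set W) : SLCSe PL → W → Prop
  | .prop p, w => w ∈ V p
  | .neg φ, w => ¬ satE V φ w
  | .and φ ψ, w => satE V φ w ∧ satE V ψ w
  | .eta φ ψ, w =>
      ∃ (π : ℕ → W) (ℓ : ℕ), PosetPMPath π ℓ ∧ π 0 = w ∧ satE V ψ (π ℓ) ∧
        ∀ i < ℓ, satE V φ (π i)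

/-! The points of a `±`-path other than its endpoint are its start `w` and its interior points,
so `η(φ, ψ)` holds at `w` exactly when `φ` and `γ(φ, ψ)` do. -/

theorem forall_lt_iff_zero_and_forall_pos {P : ℕ → Prop} {ℓ : ℕ} (hℓ : 0 < ℓ) :
    (∀ i < ℓ, P i) ↔ P 0 ∧ ∀ i, 0 < i → i < ℓ → P i := by
  refine ⟨fun h => ⟨h 0 hℓ, fun i _ hi => h i hi⟩, fun ⟨h0, hpos⟩ i hi => ?_⟩
  rcases Nat.eq_zero_or_pos i with rfl | hi0
  · exact h0
  · exact hpos i hi0 hi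

theorem PosetPMPath.pos {W : Type*} [PartialOrder W] {π : ℕ → W} {ℓ : ℕ}
    (hπ : PosetPMPath π ℓ) : 0 < ℓ :=
  lt_of_lt_of_le two_pos hπ.1

theorem exists_pmPath_forall_lt_iff {W : Type*} [PartialOrder W] (P Q : W → Prop) (w : W) :
    (∃ (π : ℕ → W) (ℓ : ℕ), PosetPMPath π ℓ ∧ π 0 = w ∧ Q (π ℓ) ∧ ∀ i < ℓ, P (π i)) ↔
      P w ∧ ∃ (π : ℕ → W) (ℓ : ℕ), PosetPMPath π ℓ ∧ π 0 = w ∧ Q (π ℓ) ∧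
        ∀ i, 0 < i → i < ℓ → P (π i) := by
  constructor
  · rintro ⟨π, ℓ, hπ, rfl, hQ, hP⟩
    obtain ⟨hstart, hinterior⟩ := (forall_lt_iff_zero_and_forall_pos hπ.pos).mp hP
    exact ⟨hstart, π, ℓ, hπ, rfl, hQ, hinterior⟩
  · rintro ⟨hw, π, ℓ, hπ, rfl, hQ, hinterior⟩
    exact ⟨π, ℓ, hπ, rfl, hQ, (forall_lt_iff_zero_and_forall_pos hπ.pos).mpr ⟨hw, hinterior⟩⟩

theorem satE_iff_satG_enc_general {W PL : Type*} [PartialOrder W]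
    (V : PL → Set W) (w : W) (Φ : SLCSe PL) :
    satE V Φ w ↔ satG V (enc Φ) w := by
  induction Φ generalizing w with
  | prop p => rfl
  | neg φ ih => exact not_congr (ih w)
  | and φ ψ ih₁ ih₂ => exact and_congr (ih₁ w) (ih₂ w)
  | eta φ ψ ih₁ ih₂ =>
    simp only [satE, satG, enc, ← ih₁, ← ih₂]
    exact exists_pmPath_forall_lt_iff _ _ w

/-- On finite poset models, a point satisfies an `SLCS_η` formula `Φ`
iff it satisfies the `SLCS_γ` formula `ℰ(Φ)`. -/
theorem satE_iff_satG_enc {W PL : Type*} [PartialOrder W] [Fintype W]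
    (V : PL → Set W) (w : W) (Φ : SLCSe PL) :
    satE V Φ w ↔ satG V (enc Φ) w :=
  satE_iff_satG_enc_general V w Φ
end

section
/- In a finite poset model ℱ = (W, ≼, 𝒱), for any ±-path π : [0;ℓ] → W from w and formulas Φ₁, Φ₂: there exists a ±-path π from w with ℱ, π(ℓ) ⊨ Φ₂ and ℱ, π(i) ⊨ Φ₁ for all i ∈ [0;ℓ), if and only if there exists a ↓-path π' : [0;ℓ'] → W from w with ℱ, π'(ℓ') ⊨ Φ₂ and ℱ, π'(i) ⊨ Φ₁ for all i ∈ [0;ℓ'). -/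
/-! A `↓`-path becomes a `±`-path by repeating its first point: `π (i - 1)` starts with
`π 0, π 0`, and the reflexive step `π 0 ≼ π 0` supplies the required initial up-step. Since
the repeated point already had to satisfy `Φ₁`, the witness condition is preserved. -/

section Stutter

variable {W : Type*} [PartialOrder W] {π : ℕ → W} {ℓ : ℕ}

theorem PosetUPath.stutter (h : PosetUPath π ℓ) :
    PosetUPath (fun i => π (i - 1)) (ℓ + 1) := by
  rintro (_ | i) hi
  · exact Or.inl le_rfl
  · simpa using h i (by omega)

theorem PosetDownPath.stutter (h : PosetDownPath π ℓ) :
    PosetPMPath (fun i => π (i - 1)) (ℓ + 1) := by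
  obtain ⟨hℓ, hU, hD⟩ := h
  refine ⟨by omega, ⟨by omega, hU.stutter, ?_⟩, le_rfl⟩
  simpa [show ℓ - 1 = ℓ + 1 - 1 - 1 by omega] using hD

end Stutter

theorem forall_lt_stutter {α : Type*} {P : α → Prop} {π : ℕ → α} {ℓ : ℕ} (hℓ : 1 ≤ ℓ)
    (h : ∀ i < ℓ, P (π i)) : ∀ i < ℓ + 1, P (π (i - 1)) :=
  fun i hi => h (i - 1) (by omega)

theorem pmPath_witness_iff_downPath_witness_general {W PL : Type*} [PartialOrder W]
    (V : PL → Set W) (w : W) (Φ₁ Φ₂ : SLCSe PL) :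
    (∃ (π : ℕ → W) (ℓ : ℕ), PosetPMPath π ℓ ∧ π 0 = w ∧
        satE V Φ₂ (π ℓ) ∧ ∀ i < ℓ, satE V Φ₁ (π i)) ↔
    (∃ (π' : ℕ → W) (ℓ' : ℕ), PosetDownPath π' ℓ' ∧ π' 0 = w ∧
        satE V Φ₂ (π' ℓ') ∧ ∀ i < ℓ', satE V Φ₁ (π' i)) := by
  constructor
  · rintro ⟨π, ℓ, hpm, h0, h2, h1⟩
    exact ⟨π, ℓ, hpm.2.1, h0, h2, h1⟩
  · rintro ⟨π, ℓ, hdown, h0, h2, h1⟩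
    exact ⟨fun i => π (i - 1), ℓ + 1, hdown.stutter, h0, h2, forall_lt_stutter hdown.1 h1⟩

/-- To evaluate an `η`-formula on a finite poset model it does not matter
whether one quantifies over `±`-paths or over `↓`-paths. -/
theorem pmPath_witness_iff_downPath_witness {W PL : Type*} [PartialOrder W] [Fintype W]
    (V : PL → Set W) (w : W) (Φ₁ Φ₂ : SLCSe PL) :
    (∃ (π : ℕ → W) (ℓ : ℕ), PosetPMPath π ℓ ∧ π 0 = w ∧
        satE V Φ₂ (π ℓ) ∧ ∀ i < ℓ, satE V Φ₁ (π i)) ↔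
    (∃ (π' : ℕ → W) (ℓ' : ℕ), PosetDownPath π' ℓ' ∧ π' 0 = w ∧
        satE V Φ₂ (π' ℓ') ∧ ∀ i < ℓ', satE V Φ₁ (π' i)) :=
  pmPath_witness_iff_downPath_witness_general V w Φ₁ Φ₂
end

section
/- Let 𝒫 = (|K|, V) be a polyhedral model and B ⊆ |K| × |K| a weak simplicial bisimulation. For all x₁, x₂ with B(x₁, x₂) and every SLCS_η formula Φ: 𝒫, x₁ ⊨ Φ if and only if 𝒫, x₂ ⊨ Φ. Hence weakly simplicial bisimilar points are SLCS_η logically equivalent. -/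
open Geometry unitInterval

/-- A weak simplicial bisimulation on a polyhedral model. -/
def WeakSimplicialBisim {m : ℕ} {PL : Type*} (M : PolyModel m PL)
    (B : M.Pt → M.Pt → Prop) : Prop :=
  Symmetric B ∧
  ∀ x₁ x₂, B x₁ x₂ →
    (∀ p, (x₁ : EuclideanSpace ℝ (Fin m)) ∈ M.V p ↔
          (x₂ : EuclideanSpace ℝ (Fin m)) ∈ M.V p) ∧
    (∀ π₁ : unitInterval → M.Pt, Continuous π₁ → π₁ 0 = x₁ →
      ∃ π₂ : unitInterval → M.Pt, Continuous π₂ ∧ π₂ 0 = x₂ ∧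
        B (π₁ 1) (π₂ 1) ∧
        ∀ r₂ : unitInterval, (r₂ : ℝ) < 1 →
          ∃ r₁ : unitInterval, (r₁ : ℝ) < 1 ∧ B (π₁ r₁) (π₂ r₂))

/-!
Induction on `Φ`, transferring satisfaction from the left to the right point of every related
pair simultaneously; symmetry of `B` is what lets the negation case use the hypothesis in the
opposite direction.
-/

namespace WeakSimplicialBisim

variable {m : ℕ} {PL : Type*} {M : PolyModel m PL} {B : M.Pt → M.Pt → Prop}

theorem satE_eta_of_rel (hB : WeakSimplicialBisim M B) {φ ψ : SLCSe PL}
    (hφ : ∀ y₁ y₂, B y₁ y₂ → M.satE φ y₁ → M.satE φ y₂)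
    (hψ : ∀ y₁ y₂, B y₁ y₂ → M.satE ψ y₁ → M.satE ψ y₂)
    {x₁ x₂ : M.Pt} (h : B x₁ x₂) (hx₁ : M.satE (.eta φ ψ) x₁) : M.satE (.eta φ ψ) x₂ := by
  obtain ⟨π₁, hπ₁, hπ₁0, hπ₁1, hπ₁φ⟩ := hx₁
  obtain ⟨π₂, hπ₂, hπ₂0, hend, hmatch⟩ := (hB.2 x₁ x₂ h).2 π₁ hπ₁ hπ₁0
  refine ⟨π₂, hπ₂, hπ₂0, hψ _ _ hend hπ₁1, fun r₂ hr₂ => ?_⟩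
  obtain ⟨r₁, hr₁, hrel⟩ := hmatch r₂ hr₂
  exact hφ _ _ hrel (hπ₁φ r₁ hr₁)

theorem satE_of_rel (hB : WeakSimplicialBisim M B) (Φ : SLCSe PL) :
    ∀ x₁ x₂, B x₁ x₂ → M.satE Φ x₁ → M.satE Φ x₂ := by
  induction Φ with
  | prop p => exact fun x₁ x₂ h => ((hB.2 x₁ x₂ h).1 p).mp
  | neg φ ih => exact fun x₁ x₂ h hx₁ hx₂ => hx₁ (ih x₂ x₁ (hB.1 h) hx₂)
  | and φ ψ ihφ ihψ => exact fun x₁ x₂ h hx₁ => ⟨ihφ x₁ x₂ h hx₁.1, ihψ x₁ x₂ h hx₁.2⟩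
  | eta φ ψ ihφ ihψ => exact fun x₁ x₂ h => hB.satE_eta_of_rel ihφ ihψ h

end WeakSimplicialBisim

/-- Points related by a weak simplicial bisimulation satisfy the same
`SLCS_η` formulas. -/
theorem weakSimplicialBisim_implies_satE_equiv {m : ℕ} {PL : Type*}
    (M : PolyModel m PL) (B : M.Pt → M.Pt → Prop)
    (hB : WeakSimplicialBisim M B) (x₁ x₂ : M.Pt) (h : B x₁ x₂) :
    ∀ Φ : SLCSe PL, M.satE Φ x₁ ↔ M.satE Φ x₂ := fun Φ =>
  ⟨hB.satE_of_rel Φ x₁ x₂ h, hB.satE_of_rel Φ x₂ x₁ (hB.1 h)⟩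
end

section
/- Let ℱ = (W, ≼, 𝒱) be a finite poset model and B ⊆ W × W a weak ±-bisimulation. For all w₁, w₂ with B(w₁, w₂) and every SLCS_η formula Φ: ℱ, w₁ ⊨ Φ if and only if ℱ, w₂ ⊨ Φ. -/
/-- A weak `±`-bisimulation on a poset model. -/
def WeakPMBisim {W PL : Type*} [PartialOrder W] (V : PL → Set W)
    (B : W → W → Prop) : Prop :=
  Symmetric B ∧
  ∀ w₁ w₂, B w₁ w₂ →
    (∀ p, w₁ ∈ V p ↔ w₂ ∈ V p) ∧
    (∀ u₁ d₁ : W, (w₁ ≤ u₁ ∨ u₁ ≤ w₁) → d₁ ≤ u₁ →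
      ∃ (π₂ : ℕ → W) (ℓ₂ : ℕ), PosetPMPath π₂ ℓ₂ ∧ π₂ 0 = w₂ ∧
        B d₁ (π₂ ℓ₂) ∧ ∀ j < ℓ₂, B w₁ (π₂ j) ∨ B u₁ (π₂ j))

/-!
A `±`-path witnessing `η(φ, ψ)` at `w₁` is cut into zigzags `x ≼± u ≽ d`, each of which the
weak `±`-bisimulation matches by a `±`-path from a partner of `x` to a partner of `d` through
partners of `x` and `u`; gluing these `±`-paths gives the witness at `w₂`. To cut off a first
zigzag one looks at the first two steps `π 0 — π 1 — π 2`: if they are not already a zigzag,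
then `π 0 ≼ π 1 ≼ π 2` and `π 1` can be dropped, shortening the path. The remainder of a path
after a zigzag need not start upwards, so the induction runs over `↓`-paths.
-/

section

variable {α : Type*}

def pathAppend (π : ℕ → α) (ℓ : ℕ) (σ : ℕ → α) : ℕ → α :=
  fun i => if i ≤ ℓ then π i else σ (i - ℓ)

lemma pathAppend_of_le {π σ : ℕ → α} {ℓ i : ℕ} (hi : i ≤ ℓ) :
    pathAppend π ℓ σ i = π i :=
  if_pos hi

lemma pathAppend_add {π σ : ℕ → α} {ℓ : ℕ} (h : π ℓ = σ 0) (i : ℕ) :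
    pathAppend π ℓ σ (ℓ + i) = σ i := by
  unfold pathAppend
  split_ifs with hi
  · obtain rfl : i = 0 := by omega
    simpa using h
  · congr 1
    omega

end

section

variable {W : Type*} [PartialOrder W]

lemma PosetUPath.append {π σ : ℕ → W} {ℓ m : ℕ} (hπ : PosetUPath π ℓ) (hσ : PosetUPath σ m)
    (h : π ℓ = σ 0) : PosetUPath (pathAppend π ℓ σ) (ℓ + m) := by
  intro i hi
  rcases lt_or_ge i ℓ with hiℓ | hiℓ
  · rw [pathAppend_of_le hiℓ.le, pathAppend_of_le hiℓ]
    exact hπ i hiℓ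
  · obtain ⟨j, rfl⟩ := Nat.exists_eq_add_of_le hiℓ
    rw [pathAppend_add h, add_assoc, pathAppend_add h]
    exact hσ j (by omega)

lemma PosetPMPath.append {π σ : ℕ → W} {ℓ m : ℕ} (hπ : PosetPMPath π ℓ) (hσ : PosetPMPath σ m)
    (h : π ℓ = σ 0) : PosetPMPath (pathAppend π ℓ σ) (ℓ + m) := by
  obtain ⟨hℓ, ⟨-, hπu, -⟩, hπ01⟩ := hπ
  obtain ⟨hm, ⟨-, hσu, hσend⟩, -⟩ := hσ
  refine ⟨by omega, ⟨by omega, hπu.append hσu h, ?_⟩, ?_⟩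
  · rw [pathAppend_add h, show ℓ + m - 1 = ℓ + (m - 1) by omega, pathAppend_add h]
    exact hσend
  · rwa [pathAppend_of_le (by omega), pathAppend_of_le (by omega)]

lemma PosetDownPath.suffix {π : ℕ → W} {ℓ k : ℕ} (hπ : PosetDownPath π ℓ) (hk : k < ℓ) :
    PosetDownPath (fun i => π (k + i)) (ℓ - k) := by
  obtain ⟨-, hπu, hπend⟩ := hπ
  refine ⟨by omega, fun i hi => hπu (k + i) (by omega), ?_⟩
  show π (k + (ℓ - k)) ≤ π (k + (ℓ - k - 1))
  rwa [show k + (ℓ - k) = ℓ by omega, show k + (ℓ - k - 1) = ℓ - 1 by omega]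

lemma PosetDownPath.update_zero {σ : ℕ → W} {m : ℕ} (hσ : PosetDownPath σ m) (hm : 2 ≤ m)
    {x : W} (hx : x ≤ σ 1) : PosetDownPath (Function.update σ 0 x) m := by
  obtain ⟨-, hσu, hσend⟩ := hσ
  refine ⟨by omega, fun i hi => ?_, ?_⟩
  · rcases Nat.eq_zero_or_pos i with rfl | hi0
    · simpa using Or.inl hx
    · rw [Function.update_of_ne (by omega), Function.update_of_ne (by omega)]
      exact hσu i hi
  · rwa [Function.update_of_ne (by omega), Function.update_of_ne (by omega)]

/-- The extension of `η(φ, ψ)`, for `p` and `q` the extensions of `φ` and `ψ`. -/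
def PMReach (p q : W → Prop) (w : W) : Prop :=
  ∃ (π : ℕ → W) (ℓ : ℕ), PosetPMPath π ℓ ∧ π 0 = w ∧ q (π ℓ) ∧ ∀ i < ℓ, p (π i)

namespace PMReach

variable {p q r : W → Prop} {w : W}

lemma mono (h : PMReach p q w) (hqr : ∀ z, q z → r z) : PMReach p r w := by
  obtain ⟨π, ℓ, hπ, hπ0, hq, hp⟩ := h
  exact ⟨π, ℓ, hπ, hπ0, hqr _ hq, hp⟩

lemma trans (h : PMReach p (PMReach p q) w) : PMReach p q w := by
  obtain ⟨π, ℓ, hπ, hπ0, ⟨σ, m, hσ, hσ0, hq, hpσ⟩, hpπ⟩ := h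
  refine ⟨pathAppend π ℓ σ, ℓ + m, hπ.append hσ hσ0.symm, ?_, ?_, fun i hi => ?_⟩
  · rwa [pathAppend_of_le (Nat.zero_le ℓ)]
  · rwa [pathAppend_add hσ0.symm]
  · rcases lt_or_ge i ℓ with hiℓ | hiℓ
    · rw [pathAppend_of_le hiℓ.le]
      exact hpπ i hiℓ
    · obtain ⟨j, rfl⟩ := Nat.exists_eq_add_of_le hiℓ
      rw [pathAppend_add hσ0.symm]
      exact hpσ j (by omega)

end PMReach

section WeakPMBisim

variable {PL : Type*} {V : PL → Set W} {B : W → W → Prop} {p q : W → Prop}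

lemma WeakPMBisim.pmReach_of_zigzag (hB : WeakPMBisim V B) (hp : ∀ a b, B a b → p a → p b)
    {x y u d : W} (hxy : B x y) (hxu : x ≤ u ∨ u ≤ x) (hdu : d ≤ u) (hpx : p x) (hpu : p u) :
    PMReach p (B d) y := by
  obtain ⟨σ, m, hσ, hσ0, hBd, hBσ⟩ := (hB.2 x y hxy).2 u d hxu hdu
  refine ⟨σ, m, hσ, hσ0, hBd, fun j hj => ?_⟩
  rcases hBσ j hj with hB' | hB'
  exacts [hp _ _ hB' hpx, hp _ _ hB' hpu]

lemma PosetDownPath.pmReach_of_weakPMBisim (hB : WeakPMBisim V B)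
    (hp : ∀ a b, B a b → p a → p b) (hq : ∀ a b, B a b → q a → q b)
    {π : ℕ → W} {ℓ : ℕ} (hπ : PosetDownPath π ℓ) (hpπ : ∀ i < ℓ, p (π i)) (hqπ : q (π ℓ))
    {y : W} (hy : B (π 0) y) : PMReach p q y := by
  induction ℓ using Nat.strong_induction_on generalizing π y with
  | _ ℓ IH =>
  have after_zigzag : ∀ k u, 0 < k → k ≤ ℓ → (π 0 ≤ u ∨ u ≤ π 0) → π k ≤ u → p u →
      PMReach p q y := by
    intro k u hk hkℓ hu hku hpu
    have hzig := hB.pmReach_of_zigzag hp hy hu hku (hpπ 0 (by omega)) hpu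
    rcases hkℓ.lt_or_eq with hkℓ | rfl
    · refine (hzig.mono fun y' hy' => IH (ℓ - k) (by omega) (hπ.suffix hkℓ) (fun i hi => ?_)
        ?_ hy').trans
      · exact hpπ (k + i) (by omega)
      · rwa [show k + (ℓ - k) = ℓ by omega]
    · exact hzig.mono fun y' hy' => hq _ _ hy' hqπ
  obtain ⟨hℓ, hπu, hπend⟩ := hπ
  by_cases h10 : π 1 ≤ π 0
  · exact after_zigzag 1 (π 0) one_pos hℓ (Or.inl le_rfl) h10 (hpπ 0 hℓ)
  have h01 : π 0 ≤ π 1 := (hπu 0 hℓ).resolve_right h10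
  have hℓ2 : 2 ≤ ℓ := by
    by_contra! hℓ2
    obtain rfl : ℓ = 1 := by omega
    exact h10 hπend
  by_cases h21 : π 2 ≤ π 1
  · exact after_zigzag 2 (π 1) two_pos hℓ2 (Or.inl h01) h21 (hpπ 1 hℓ2)
  have h12 : π 1 ≤ π 2 := (hπu 1 hℓ2).resolve_right h21
  have hℓ3 : 3 ≤ ℓ := by
    by_contra! hℓ3
    obtain rfl : ℓ = 2 := by omega
    exact h21 hπend
  have hskip := (PosetDownPath.suffix ⟨hℓ, hπu, hπend⟩ (by omega)).update_zero (by omega)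
    (h01.trans h12)
  refine IH (ℓ - 1) (by omega) hskip (fun i hi => ?_) ?_ (by simpa using hy)
  · rcases Nat.eq_zero_or_pos i with rfl | hi0
    · simpa using hpπ 0 hℓ
    · rw [Function.update_of_ne hi0.ne']
      exact hpπ (1 + i) (by omega)
  · rwa [Function.update_of_ne (by omega), show 1 + (ℓ - 1) = ℓ by omega]

lemma PMReach.of_weakPMBisim (hB : WeakPMBisim V B)
    (hp : ∀ a b, B a b → p a → p b) (hq : ∀ a b, B a b → q a → q b)
    {x y : W} (hx : PMReach p q x) (hxy : B x y) : PMReach p q y := by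
  obtain ⟨π, ℓ, hπ, rfl, hqπ, hpπ⟩ := hx
  exact hπ.2.1.pmReach_of_weakPMBisim hB hp hq hpπ hqπ hxy

end WeakPMBisim

end

theorem weakPMBisim_implies_satE_equiv_general {W PL : Type*} [PartialOrder W]
    (V : PL → Set W) (B : W → W → Prop) (hB : WeakPMBisim V B)
    (w₁ w₂ : W) (h : B w₁ w₂) :
    ∀ Φ : SLCSe PL, satE V Φ w₁ ↔ satE V Φ w₂ := by
  suffices H : ∀ Φ : SLCSe PL, ∀ a b, B a b → (satE V Φ a ↔ satE V Φ b) from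
    fun Φ => H Φ w₁ w₂ h
  intro Φ
  induction Φ with
  | prop p => exact fun a b hab => (hB.2 a b hab).1 p
  | neg φ ih => exact fun a b hab => not_congr (ih a b hab)
  | and φ ψ ihφ ihψ => exact fun a b hab => and_congr (ihφ a b hab) (ihψ a b hab)
  | eta φ ψ ihφ ihψ =>
    have hφ : ∀ a b, B a b → satE V φ a → satE V φ b := fun a b hab => (ihφ a b hab).1
    have hψ : ∀ a b, B a b → satE V ψ a → satE V ψ b := fun a b hab => (ihψ a b hab).1
    exact fun a b hab => ⟨fun ha => PMReach.of_weakPMBisim hB hφ hψ ha hab,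
      fun hb => PMReach.of_weakPMBisim hB hφ hψ hb (hB.1 hab)⟩

/-- Weakly `±`-bisimilar elements of a finite poset model satisfy the same
`SLCS_η` formulas. -/
theorem weakPMBisim_implies_satE_equiv {W PL : Type*} [PartialOrder W] [Fintype W]
    (V : PL → Set W) (B : W → W → Prop) (hB : WeakPMBisim V B)
    (w₁ w₂ : W) (h : B w₁ w₂) :
    ∀ Φ : SLCSe PL, satE V Φ w₁ ↔ satE V Φ w₂ :=
  weakPMBisim_implies_satE_equiv_general V B hB w₁ w₂ h
end

section
/- Let ℱ = (W, ≼, 𝒱) be a finite poset model and B ⊆ W × W a weak ±-bisimulation. For all w₁, w₂ with B(w₁, w₂): for every ↓-path π₁ : [0;k₁] → W from w₁ there is a ↓-path π₂ : [0;k₂] → W from w₂ such that B(π₁(k₁), π₂(k₂)) and for each j ∈ [0;k₂) there is i ∈ [0;k₁) with B(π₁(i), π₂(j)). -/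
/-!
The matching path is built one step of `π₁` at a time. A step `π₁ i — π₁ (i+1)` of a `↓`-path
always sits below a point `π₁ i'` with `i' < k₁` that is comparable to `π₁ i`: `π₁ i` itself if the
step goes down, and `π₁ (i+1)` if it goes up (an up-step cannot be the last one). The bisimulation
clause for `u₁ := π₁ i'` and `d₁ := π₁ (i+1)` then yields a `±`-path, which is in particular a
`↓`-path, and these are concatenated.
-/

def concatPath {α : Type*} (π : ℕ → α) (k : ℕ) (σ : ℕ → α) : ℕ → α :=
  fun j => if j < k then π j else σ (j - k)

section concatPath

variable {α : Type*} {π σ : ℕ → α} {k ℓ : ℕ}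

theorem concatPath_of_lt {j : ℕ} (hj : j < k) : concatPath π k σ j = π j := if_pos hj

theorem concatPath_of_le {j : ℕ} (hj : k ≤ j) : concatPath π k σ j = σ (j - k) :=
  if_neg (Nat.not_lt.mpr hj)

theorem concatPath_add (j : ℕ) : concatPath π k σ (k + j) = σ j := by
  rw [concatPath_of_le (Nat.le_add_right k j), Nat.add_sub_cancel_left]

theorem concatPath_zero (hk : 0 < k) : concatPath π k σ 0 = π 0 := concatPath_of_lt hk

theorem forall_concatPath_lt {p : α → Prop} (hπ : ∀ j < k, p (π j)) (hσ : ∀ j < ℓ, p (σ j)) :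
    ∀ j < k + ℓ, p (concatPath π k σ j) := by
  intro j hj
  rcases Nat.lt_or_ge j k with hjk | hjk
  · exact concatPath_of_lt hjk ▸ hπ j hjk
  · exact concatPath_of_le hjk ▸ hσ (j - k) (by omega)

end concatPath

section Paths

variable {W : Type*} [PartialOrder W] {π σ : ℕ → W} {k ℓ : ℕ}

theorem PosetUPath.concat (hπ : PosetUPath π k) (hσ : PosetUPath σ ℓ) (h : σ 0 = π k) :
    PosetUPath (concatPath π k σ) (k + ℓ) := by
  intro j hj
  rcases Nat.lt_or_ge (j + 1) k with hjk | hjk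
  · rw [concatPath_of_lt hjk, concatPath_of_lt (Nat.lt_of_succ_lt hjk)]
    exact hπ j (Nat.lt_of_succ_lt hjk)
  rcases Nat.lt_or_ge j k with hjk' | hjk'
  · obtain rfl : k = j + 1 := by omega
    rw [concatPath_of_lt hjk', concatPath_of_le hjk, Nat.sub_self, h]
    exact hπ j hjk'
  · rw [concatPath_of_le hjk, concatPath_of_le hjk', Nat.sub_add_comm hjk']
    exact hσ (j - k) (by omega)

theorem PosetDownPath.concat (hπ : PosetUPath π k) (hσ : PosetDownPath σ ℓ) (h : σ 0 = π k) :
    PosetDownPath (concatPath π k σ) (k + ℓ) := by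
  obtain ⟨hℓ, hσU, hσlast⟩ := hσ
  refine ⟨by omega, hπ.concat hσU h, ?_⟩
  rw [concatPath_add, show k + ℓ - 1 = k + (ℓ - 1) by omega, concatPath_add]
  exact hσlast

theorem PosetDownPath.exists_upper_of_step (hπ : PosetDownPath π k) {i : ℕ} (hi : i < k) :
    ∃ i' < k, (π i ≤ π i' ∨ π i' ≤ π i) ∧ π (i + 1) ≤ π i' := by
  obtain ⟨-, hU, hlast⟩ := hπ
  rcases hU i hi with hup | hdown
  · rcases Nat.lt_or_ge (i + 1) k with hik | hik
    · exact ⟨i + 1, hik, Or.inl hup, le_rfl⟩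
    · obtain rfl : k = i + 1 := by omega
      exact ⟨i, hi, Or.inl le_rfl, hlast⟩
  · exact ⟨i, hi, Or.inl le_rfl, hdown⟩

end Paths

theorem WeakPMBisim.exists_downPath_step {W PL : Type*} [PartialOrder W] {V : PL → Set W}
    {B : W → W → Prop} (hB : WeakPMBisim V B) {π₁ : ℕ → W} {k₁ : ℕ}
    (hπ₁ : PosetDownPath π₁ k₁) {i : ℕ} (hi : i < k₁) {y : W} (hy : B (π₁ i) y) :
    ∃ (σ : ℕ → W) (ℓ : ℕ), PosetDownPath σ ℓ ∧ σ 0 = y ∧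
      B (π₁ (i + 1)) (σ ℓ) ∧ ∀ j < ℓ, ∃ i' < k₁, B (π₁ i') (σ j) := by
  obtain ⟨i', hi', hcomp, hbelow⟩ := hπ₁.exists_upper_of_step hi
  obtain ⟨σ, ℓ, ⟨-, hσ, -⟩, hσ0, hσend, hσB⟩ := (hB.2 _ _ hy).2 _ _ hcomp hbelow
  refine ⟨σ, ℓ, hσ, hσ0, hσend, fun j hj => ?_⟩
  rcases hσB j hj with hB' | hB'
  · exact ⟨i, hi, hB'⟩
  · exact ⟨i', hi', hB'⟩

theorem weakPMBisim_downPath_transfer_general {W PL : Type*} [PartialOrder W]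
    (V : PL → Set W) (B : W → W → Prop) (hB : WeakPMBisim V B)
    (w₁ w₂ : W) (h : B w₁ w₂)
    (π₁ : ℕ → W) (k₁ : ℕ) (hπ₁ : PosetDownPath π₁ k₁) (hstart : π₁ 0 = w₁) :
    ∃ (π₂ : ℕ → W) (k₂ : ℕ), PosetDownPath π₂ k₂ ∧ π₂ 0 = w₂ ∧
      B (π₁ k₁) (π₂ k₂) ∧ ∀ j < k₂, ∃ i < k₁, B (π₁ i) (π₂ j) := by
  suffices H : ∀ i < k₁, ∃ (π₂ : ℕ → W) (k₂ : ℕ), PosetDownPath π₂ k₂ ∧ π₂ 0 = w₂ ∧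
      B (π₁ (i + 1)) (π₂ k₂) ∧ ∀ j < k₂, ∃ i' < k₁, B (π₁ i') (π₂ j) by
    have hk₁ : 1 ≤ k₁ := hπ₁.1
    simpa only [Nat.sub_add_cancel hk₁] using H (k₁ - 1) (by omega)
  intro i hi
  induction i with
  | zero => exact hB.exists_downPath_step hπ₁ hi (hstart ▸ h)
  | succ i ih =>
    obtain ⟨π₂, k₂, hπ₂, hπ₂0, hend, hmatch⟩ := ih (by omega)
    obtain ⟨σ, ℓ, hσ, hσ0, hσend, hσmatch⟩ := hB.exists_downPath_step hπ₁ hi hend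
    refine ⟨concatPath π₂ k₂ σ, k₂ + ℓ, .concat hπ₂.2.1 hσ hσ0, ?_, ?_,
      forall_concatPath_lt (p := fun x => ∃ i' < k₁, B (π₁ i') x) hmatch hσmatch⟩
    · rw [concatPath_zero hπ₂.1, hπ₂0]
    · rwa [concatPath_add]

/-- A weak `±`-bisimulation transfers `↓`-paths: every `↓`-path from `w₁`
is matched by a `↓`-path from `w₂` whose endpoints are related by `B` and each
of whose non-final points is related to some non-final point of the original. -/
theorem weakPMBisim_downPath_transfer {W PL : Type*} [PartialOrder W] [Fintype W]
    (V : PL → Set W) (B : W → W → Prop) (hB : WeakPMBisim V B)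
    (w₁ w₂ : W) (h : B w₁ w₂)
    (π₁ : ℕ → W) (k₁ : ℕ) (hπ₁ : PosetDownPath π₁ k₁) (hstart : π₁ 0 = w₁) :
    ∃ (π₂ : ℕ → W) (k₂ : ℕ), PosetDownPath π₂ k₂ ∧ π₂ 0 = w₂ ∧
      B (π₁ k₁) (π₂ k₂) ∧ ∀ j < k₂, ∃ i < k₁, B (π₁ i) (π₂ j) :=
  weakPMBisim_downPath_transfer_general V B hB w₁ w₂ h π₁ k₁ hπ₁ hstart
end

section
/- Let ℱ = (W, ≼, 𝒱) be a finite poset model. The SLCS_η logical equivalence relation ≡_η on W is itself a weak ±-bisimulation. Consequently, w₁ ≡_η w₂ if and only if w₁ and w₂ are weakly ±-bisimilar (Hennessy-Milner property for weak ±-bisimilarity and SLCS_η on finite poset models). -/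
/-!
A weak `±`-bisimulation preserves `SLCS_η`: a `±`-path is a chain of single comparability steps,
the last one downward, and the bisimulation clause matches each step by a `±`-path through points
bisimilar to the ends of the step (to its start only, for a downward step); so no point of the
concatenated matches before their end is bisimilar only to the end of the original path, and they
witness the same `η`-formula. Conversely, on a finite model every `≡_η`-class is defined by
one formula `χ_x`, a conjunction of formulas separating `x` from the finitely many inequivalent
points; then `w₁ ⊨ η(χ_{w₁} ∨ χ_{u₁}, χ_{d₁})` is witnessed by the path `w₁, u₁, d₁` (or
`w₁, w₁, d₁`), and the same formula at `w₂` yields the path required of `≡_η`.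
-/

section Paths

variable {W : Type*} [PartialOrder W]

lemma exists_posetPMPath_two {a b c : W} (hab : a ≤ b) (hcb : c ≤ b) :
    ∃ π : ℕ → W, PosetPMPath π 2 ∧ π 0 = a ∧ π 1 = b ∧ π 2 = c := by
  refine ⟨fun i => if i = 0 then a else if i = 1 then b else c, ?_, rfl, rfl, rfl⟩
  refine ⟨le_rfl, ⟨by norm_num, fun i hi => ?_, hcb⟩, hab⟩
  obtain rfl | rfl : i = 0 ∨ i = 1 := by omega
  exacts [Or.inl hab, Or.inr hcb]

lemma PosetDownPath.tail {π : ℕ → W} {n : ℕ} (hπ : PosetDownPath π (n + 2)) :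
    PosetDownPath (fun i => π (i + 1)) (n + 1) :=
  ⟨by omega, fun i hi => hπ.2.1 (i + 1) (by omega), hπ.2.2⟩

lemma PosetPMPath.append_s13 {τ ρ : ℕ → W} {a b : ℕ} (hτ : PosetPMPath τ a)
    (hρ : PosetPMPath ρ b) (hjoin : ρ 0 = τ a) :
    PosetPMPath (fun j => if j < a then τ j else ρ (j - a)) (a + b) := by
  obtain ⟨ha, ⟨-, hτu, -⟩, hτ01⟩ := hτ
  obtain ⟨hb, ⟨-, hρu, hρend⟩, -⟩ := hρ
  refine ⟨by omega, ⟨by omega, fun i hi => ?_, ?_⟩, ?_⟩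
  · rcases lt_trichotomy (i + 1) a with hlt | heq | hgt
    · simpa [show i < a by omega, hlt] using hτu i (by omega)
    · simpa [show i < a by omega, ← heq, hjoin] using hτu i (by omega)
    · simpa [show ¬ i < a by omega, show ¬ i + 1 < a by omega,
        show i + 1 - a = i - a + 1 by omega] using hρu (i - a) (by omega)
  · simpa [show a + b - 1 - a = b - 1 by omega, show ¬ a + b - 1 < a by omega] using hρend
  · simpa [show 0 < a by omega, show 1 < a by omega] using hτ01

end Paths

section Formulas

variable {W PL : Type*} [PartialOrder W]

def SLCSe.top (p : PL) : SLCSe PL := .neg (.and (.prop p) (.neg (.prop p)))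

def SLCSe.or (φ ψ : SLCSe PL) : SLCSe PL := .neg (.and (.neg φ) (.neg ψ))

@[simp] lemma satE_top (V : PL → Set W) (p : PL) (w : W) : satE V (.top p) w := by
  simp [SLCSe.top, satE]

@[simp] lemma satE_or (V : PL → Set W) (φ ψ : SLCSe PL) (w : W) :
    satE V (φ.or ψ) w ↔ satE V φ w ∨ satE V ψ w := by
  simp only [SLCSe.or, satE]
  tauto

end Formulas

section Bisimulation

variable {W PL : Type*} [PartialOrder W] {V : PL → Set W} {B : W → W → Prop}

lemma WeakPMBisim.exists_posetPMPath_of_ge (hB : WeakPMBisim V B) {x x' y : W} (hxy : B x y)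
    (hdown : x' ≤ x) :
    ∃ π₂ ℓ₂, PosetPMPath π₂ ℓ₂ ∧ π₂ 0 = y ∧ B x' (π₂ ℓ₂) ∧ ∀ j < ℓ₂, B x (π₂ j) := by
  obtain ⟨π₂, ℓ₂, hπ₂, h0, hend, hmid⟩ := (hB.2 x y hxy).2 x x' (Or.inl le_rfl) hdown
  exact ⟨π₂, ℓ₂, hπ₂, h0, hend, fun j hj => (hmid j hj).elim id id⟩

lemma WeakPMBisim.exists_posetPMPath_of_comparable (hB : WeakPMBisim V B) {x x' y : W} (hxy : B x y)
    (hstep : x ≤ x' ∨ x' ≤ x) :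
    ∃ π₂ ℓ₂, PosetPMPath π₂ ℓ₂ ∧ π₂ 0 = y ∧ B x' (π₂ ℓ₂) ∧
      ∀ j < ℓ₂, B x (π₂ j) ∨ B x' (π₂ j) := by
  rcases hstep with hup | hdown
  · exact (hB.2 x y hxy).2 x' x' (Or.inl hup) le_rfl
  · obtain ⟨π₂, ℓ₂, hπ₂, h0, hend, hmid⟩ := hB.exists_posetPMPath_of_ge hxy hdown
    exact ⟨π₂, ℓ₂, hπ₂, h0, hend, fun j hj => .inl (hmid j hj)⟩

lemma WeakPMBisim.exists_posetPMPath_of_posetDownPath (hB : WeakPMBisim V B) {π : ℕ → W}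
    {ℓ : ℕ} (hπ : PosetDownPath π ℓ) {y : W} (hy : B (π 0) y) :
    ∃ π₂ ℓ₂, PosetPMPath π₂ ℓ₂ ∧ π₂ 0 = y ∧ B (π ℓ) (π₂ ℓ₂) ∧
      ∀ j < ℓ₂, ∃ i < ℓ, B (π i) (π₂ j) := by
  induction ℓ generalizing π y with
  | zero => exact absurd hπ.1 (by norm_num)
  | succ n ih =>
    rcases n with _ | n
    · obtain ⟨π₂, ℓ₂, hπ₂, h0, hend, hmid⟩ := hB.exists_posetPMPath_of_ge hy hπ.2.2
      exact ⟨π₂, ℓ₂, hπ₂, h0, hend, fun j hj => ⟨0, one_pos, hmid j hj⟩⟩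
    · obtain ⟨τ, a, hτ, hτ0, hτend, hτmid⟩ :=
        hB.exists_posetPMPath_of_comparable hy (hπ.2.1 0 (by omega))
      obtain ⟨ρ, b, hρ, hρ0, hρend, hρmid⟩ := ih hπ.tail hτend
      have ha : 0 < a := by have := hτ.1; omega
      refine ⟨_, a + b, hτ.append_s13 hρ hρ0, by simp [ha, hτ0], by simpa using hρend,
        fun j hj => ?_⟩
      by_cases hja : j < a
      · rcases hτmid j hja with h | h
        exacts [⟨0, by omega, by simpa [hja] using h⟩, ⟨1, by omega, by simpa [hja] using h⟩]
      · obtain ⟨i, hi, h⟩ := hρmid (j - a) (by omega)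
        exact ⟨i + 1, by omega, by simpa [hja] using h⟩

lemma WeakPMBisim.satE_of_satE (hB : WeakPMBisim V B) (Φ : SLCSe PL) {x y : W} (hxy : B x y)
    (hx : satE V Φ x) : satE V Φ y := by
  induction Φ generalizing x y with
  | prop p => exact ((hB.2 x y hxy).1 p).mp hx
  | neg φ ih => exact fun hy => hx (ih (hB.1 hxy) hy)
  | and φ ψ ihφ ihψ => exact ⟨ihφ hxy hx.1, ihψ hxy hx.2⟩
  | eta φ ψ ihφ ihψ =>
    obtain ⟨π, ℓ, hπ, rfl, hend, hmid⟩ := hx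
    obtain ⟨π₂, ℓ₂, hπ₂, h0, hend₂, hmid₂⟩ :=
      hB.exists_posetPMPath_of_posetDownPath hπ.2.1 hxy
    refine ⟨π₂, ℓ₂, hπ₂, h0, ihψ hend₂ hend, fun j hj => ?_⟩
    obtain ⟨i, hi, h⟩ := hmid₂ j hj
    exact ihφ h (hmid i hi)

lemma WeakPMBisim.satE_iff (hB : WeakPMBisim V B) (Φ : SLCSe PL) {x y : W} (hxy : B x y) :
    satE V Φ x ↔ satE V Φ y :=
  ⟨hB.satE_of_satE Φ hxy, hB.satE_of_satE Φ (hB.1 hxy)⟩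

end Bisimulation

section LogicalEquivalence

variable {W PL : Type*} [PartialOrder W] (V : PL → Set W)

def SLCSeEquiv (x y : W) : Prop := ∀ Φ : SLCSe PL, satE V Φ x ↔ satE V Φ y

variable {V}

lemma SLCSeEquiv.refl (x : W) : SLCSeEquiv V x x := fun _ => Iff.rfl

lemma exists_satE_not_satE_of_not_slcseEquiv {x y : W} (h : ¬ SLCSeEquiv V x y) :
    ∃ φ : SLCSe PL, satE V φ x ∧ ¬ satE V φ y := by
  obtain ⟨φ, hφ⟩ := not_forall.mp h
  by_cases hx : satE V φ x
  · exact ⟨φ, hx, fun hy => hφ (iff_of_true hx hy)⟩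
  · exact ⟨.neg φ, hx, fun hy => hφ (iff_of_false hx hy)⟩

lemma exists_satE_separating (p : PL) (x : W) (S : Finset W)
    (hS : ∀ y ∈ S, ¬ SLCSeEquiv V x y) :
    ∃ φ : SLCSe PL, satE V φ x ∧ ∀ y ∈ S, ¬ satE V φ y := by
  classical
  induction S using Finset.induction_on with
  | empty => exact ⟨.top p, satE_top V p x, by simp⟩
  | insert y S _ ih =>
    obtain ⟨φ, hφx, hφS⟩ := ih fun z hz => hS z (Finset.mem_insert_of_mem hz)
    obtain ⟨δ, hδx, hδy⟩ :=
      exists_satE_not_satE_of_not_slcseEquiv (hS y (Finset.mem_insert_self y S))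
    refine ⟨.and δ φ, ⟨hδx, hφx⟩, fun z hz hz' => ?_⟩
    rcases Finset.mem_insert.mp hz with rfl | hz
    exacts [hδy hz'.1, hφS z hz hz'.2]

lemma exists_satE_iff_slcseEquiv [Finite W] (p : PL) (x : W) :
    ∃ χ : SLCSe PL, ∀ z, satE V χ z ↔ SLCSeEquiv V x z := by
  classical
  have := Fintype.ofFinite W
  obtain ⟨χ, hχx, hχS⟩ :=
    exists_satE_separating (V := V) p x (Finset.univ.filter fun y => ¬ SLCSeEquiv V x y)
      (by simp)
  exact ⟨χ, fun z => ⟨fun hz => by_contra fun h => hχS z (by simpa using h) hz,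
    fun h => (h χ).mp hχx⟩⟩

lemma weakPMBisim_slcseEquiv_of_definable
    (hdef : ∀ x : W, ∃ χ : SLCSe PL, ∀ z, satE V χ z ↔ SLCSeEquiv V x z) :
    WeakPMBisim V (SLCSeEquiv V) := by
  refine ⟨fun x y h Φ => (h Φ).symm, fun w₁ w₂ hw => ⟨fun p => hw (.prop p), ?_⟩⟩
  intro u₁ d₁ hu hd
  obtain ⟨χw, hχw⟩ := hdef w₁
  obtain ⟨χu, hχu⟩ := hdef u₁
  obtain ⟨χd, hχd⟩ := hdef d₁
  have hw₁ : satE V (.eta (χw.or χu) χd) w₁ := by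
    obtain ⟨b, hwb, hdb, hb⟩ : ∃ b, w₁ ≤ b ∧ d₁ ≤ b ∧ (b = w₁ ∨ b = u₁) :=
      hu.elim (fun h => ⟨u₁, h, hd, Or.inr rfl⟩) (fun h => ⟨w₁, le_rfl, hd.trans h, Or.inl rfl⟩)
    obtain ⟨π, hπ, h0, h1, h2⟩ := exists_posetPMPath_two hwb hdb
    refine ⟨π, 2, hπ, h0, h2 ▸ (hχd d₁).mpr (.refl d₁), fun i hi => (satE_or ..).mpr ?_⟩
    obtain rfl | rfl : i = 0 ∨ i = 1 := by omega
    · exact .inl (h0 ▸ (hχw w₁).mpr (.refl w₁))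
    · rcases hb with rfl | rfl
      exacts [.inl (h1 ▸ (hχw b).mpr (.refl b)), .inr (h1 ▸ (hχu b).mpr (.refl b))]
  obtain ⟨π₂, ℓ₂, hπ₂, h0, hend, hmid⟩ := (hw _).mp hw₁
  exact ⟨π₂, ℓ₂, hπ₂, h0, (hχd _).mp hend,
    fun j hj => ((satE_or ..).mp (hmid j hj)).imp (hχw _).mp (hχu _).mp⟩

instance SLCSe.instIsEmpty [IsEmpty PL] : IsEmpty (SLCSe PL) :=
  ⟨fun Φ => by
    induction Φ with
    | prop p => exact isEmptyElim p
    | neg _ ih | and _ _ ih | eta _ _ ih => exact ih⟩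

lemma weakPMBisim_slcseEquiv_of_isEmpty [IsEmpty PL] : WeakPMBisim V (SLCSeEquiv V) := by
  have hall : ∀ x y : W, SLCSeEquiv V x y := fun _ _ Φ => isEmptyElim Φ
  refine ⟨fun x y _ => hall y x, fun w₁ w₂ _ => ⟨isEmptyElim, fun u₁ d₁ _ _ => ?_⟩⟩
  obtain ⟨π, hπ, h0, -, -⟩ := exists_posetPMPath_two (le_refl w₂) (le_refl w₂)
  exact ⟨π, 2, hπ, h0, hall _ _, fun _ _ => .inl (hall _ _)⟩

lemma weakPMBisim_slcseEquiv [Finite W] : WeakPMBisim V (SLCSeEquiv V) := by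
  rcases isEmpty_or_nonempty PL with _ | ⟨⟨p⟩⟩
  · exact weakPMBisim_slcseEquiv_of_isEmpty
  · exact weakPMBisim_slcseEquiv_of_definable (exists_satE_iff_slcseEquiv p)

end LogicalEquivalence

/-- Hennessy–Milner property on finite poset models: `SLCS_η` logical
equivalence is itself a weak `±`-bisimulation, and two elements are logically
equivalent iff they are weakly `±`-bisimilar. -/
theorem hennessyMilner_weakPM {W PL : Type*} [PartialOrder W] [Fintype W]
    (V : PL → Set W) :
    WeakPMBisim V (fun w₁ w₂ => ∀ Φ : SLCSe PL, satE V Φ w₁ ↔ satE V Φ w₂) ∧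
    ∀ w₁ w₂ : W,
      (∀ Φ : SLCSe PL, satE V Φ w₁ ↔ satE V Φ w₂) ↔
      (∃ B : W → W → Prop, WeakPMBisim V B ∧ B w₁ w₂) := by
  refine ⟨weakPMBisim_slcseEquiv, fun w₁ w₂ => ⟨fun h => ⟨_, weakPMBisim_slcseEquiv, h⟩, ?_⟩⟩
  rintro ⟨B, hB, hw⟩ Φ
  exact WeakPMBisim.satE_iff hB Φ hw
end

section
/- In the reflexive Kripke model on {A, B, C, AB, AC, BC, ABC} whose accessibility relation is generated by A ≼ AB, A ≼ AC, B ≼ AB, B ≼ BC, C ≼ AC, C ≼ BC, AB ≼ ABC, AC ≼ ABC, BC ≼ ABC (the cell poset of a filled triangle), with valuation assigning 'red' to {AB, AC, BC} and 'blue' to {A, B, C, ABC}: the elements A and ABC satisfy exactly the same SLCS_η formulas, but A satisfies γ(red, true) while ABC does not. -/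
/-- Proposition letters: `red` and `blue`. -/
inductive Col : Type
  | red
  | blue

/-- The cell poset of a filled triangle: nonempty subsets of `{0,1,2}`
ordered by inclusion.  Singletons are the vertices `A`, `B`, `C`; doubletons
are the open edges `AB`, `AC`, `BC`; the full set is the open triangle `ABC`. -/
abbrev TriCell : Type := {s : Finset (Fin 3) // s.Nonempty}

/-- Valuation: `red` holds on the three open edges (cardinality-2 cells),
`blue` on the vertices and the open triangle. -/
def triVal : Col → Set TriCell
  | Col.red => {s | s.1.card = 2}
  | Col.blue => {s | s.1.card ≠ 2}

/-- The vertex `A`. -/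
def cellA : TriCell := ⟨{0}, by simp⟩

/-- The open triangle `ABC`. -/
def cellABC : TriCell := ⟨{0, 1, 2}, by simp⟩

/-- `true` as the `SLCS_γ` formula `red ∨ ¬red = ¬(¬red ∧ ¬¬red)`. -/
def gTrue : SLCSg Col :=
  SLCSg.neg (SLCSg.and (SLCSg.neg (SLCSg.prop Col.red))
    (SLCSg.neg (SLCSg.neg (SLCSg.prop Col.red))))

/-!
Whether a cell satisfies an `SLCS_η` formula depends only on its colour. Indeed, in the
triangle every cell starts a `±`-path that keeps its own colour until the last step and
ends in a cell of any prescribed colour (go up to `ABC` and down to an edge, or down from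
an edge to a vertex), and `η` only sees the colours along the path up to the endpoint.
`γ` does not constrain the start, so from `A` it can step up into the red edge `AB`; from
the top cell `ABC` the first step of a `±`-path stays at the blue `ABC`.
-/

section PosetModel

variable {W PL : Type*} [PartialOrder W]

def peakPath (a b c : W) : ℕ → W
  | 0 => a
  | 1 => b
  | _ => c

theorem peakPath_posetPMPath {a b c : W} (hab : a ≤ b) (hcb : c ≤ b) :
    PosetPMPath (peakPath a b c) 2 := by
  refine ⟨le_rfl, ⟨one_le_two, fun i hi => ?_, hcb⟩, hab⟩
  interval_cases i
  exacts [Or.inl hab, Or.inr hcb]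

theorem satE_congr_of_exists_pmPath {α : Type*} (V : PL → Set W) (f : W → α)
    (hV : ∀ p w w', f w = f w' → (w ∈ V p ↔ w' ∈ V p))
    (hpath : ∀ w u : W, ∃ (π : ℕ → W) (ℓ : ℕ), PosetPMPath π ℓ ∧ π 0 = w ∧
      f (π ℓ) = f u ∧ ∀ i < ℓ, f (π i) = f w) :
    ∀ (Φ : SLCSe PL) (w w' : W), f w = f w' → (satE V Φ w ↔ satE V Φ w') := by
  intro Φ
  induction Φ with
  | prop p => exact hV p
  | neg φ ih => exact fun w w' h => not_congr (ih w w' h)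
  | and φ ψ ihφ ihψ => exact fun w w' h => and_congr (ihφ w w' h) (ihψ w w' h)
  | eta φ ψ ihφ ihψ =>
    suffices key : ∀ w w', f w = f w' → satE V (.eta φ ψ) w → satE V (.eta φ ψ) w' from
      fun w w' h => ⟨key w w' h, key w' w h.symm⟩
    rintro w w' h ⟨π, ℓ, hπ, rfl, hψ, hφ⟩
    have hφ₀ : satE V φ (π 0) := hφ 0 (lt_of_lt_of_le two_pos hπ.1)
    obtain ⟨π', ℓ', hπ', rfl, hend, hcol⟩ := hpath w' (π ℓ)
    exact ⟨π', ℓ', hπ', rfl, (ihψ _ _ hend.symm).mp hψ,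
      fun i hi => (ihφ _ _ (h.trans (hcol i hi).symm)).mp hφ₀⟩

theorem satG_gamma_of_le {V : PL → Set W} {φ ψ : SLCSg PL} {w v : W} (hwv : w ≤ v)
    (hφ : satG V φ v) (hψ : satG V ψ v) : satG V (.gamma φ ψ) w :=
  ⟨peakPath w v v, 2, peakPath_posetPMPath hwv le_rfl, rfl, hψ,
    fun i hi₀ hi₂ => by rwa [show i = 1 by omega]⟩

theorem not_satG_gamma_of_isMax {V : PL → Set W} {φ ψ : SLCSg PL} {w : W} (hw : IsMax w)
    (hφ : ¬ satG V φ w) : ¬ satG V (.gamma φ ψ) w := by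
  rintro ⟨π, ℓ, ⟨hℓ, -, hπ₀₁⟩, rfl, -, hφπ⟩
  exact hφ (hw.eq_of_le hπ₀₁ ▸ hφπ 1 one_pos (by omega))

end PosetModel

theorem le_cellABC (w : TriCell) : w ≤ cellABC := by
  change w.1 ⊆ {0, 1, 2}
  rw [show ({0, 1, 2} : Finset (Fin 3)) = Finset.univ by decide]
  exact Finset.subset_univ w.1

theorem satG_gTrue (w : TriCell) : satG triVal gTrue w := by
  simp only [satG, gTrue]
  tauto

theorem triangle_exists_pmPath_colour (w u : TriCell) :
    ∃ (π : ℕ → TriCell) (ℓ : ℕ), PosetPMPath π ℓ ∧ π 0 = w ∧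
      ((π ℓ).1.card = 2) = (u.1.card = 2) ∧ ∀ i < ℓ, ((π i).1.card = 2) = (w.1.card = 2) := by
  have lt_two : ∀ i < 2, i = 0 ∨ i = 1 := by omega
  by_cases hwu : (w.1.card = 2) = (u.1.card = 2)
  · refine ⟨peakPath w w w, 2, peakPath_posetPMPath le_rfl le_rfl, rfl, hwu, fun i hi => ?_⟩
    rcases lt_two i hi with rfl | rfl <;> rfl
  by_cases hw : w.1.card = 2
  · obtain ⟨x, hx⟩ := w.2
    have hu : u.1.card ≠ 2 := fun hu => hwu (propext (iff_of_true hw hu))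
    have hxw : (⟨{x}, Finset.singleton_nonempty x⟩ : TriCell) ≤ w :=
      Finset.singleton_subset_iff.mpr hx
    refine ⟨peakPath w w ⟨{x}, Finset.singleton_nonempty x⟩, 2,
      peakPath_posetPMPath le_rfl hxw, rfl, propext (iff_of_false (by simp [peakPath]) hu),
      fun i hi => ?_⟩
    rcases lt_two i hi with rfl | rfl <;> rfl
  · have hu : u.1.card = 2 := by_contra fun hu => hwu (propext (iff_of_false hw hu))
    refine ⟨peakPath w cellABC ⟨{0, 1}, by simp⟩, 2,
      peakPath_posetPMPath (le_cellABC w) (le_cellABC _), rfl,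
      propext (iff_of_true (by decide : ({0, 1} : Finset (Fin 3)).card = 2) hu),
      fun i hi => ?_⟩
    rcases lt_two i hi with rfl | rfl
    · rfl
    · exact propext (iff_of_false (by decide : cellABC.1.card ≠ 2) hw)

/-- In the triangle cell-poset model, `A` and `ABC` satisfy exactly the same
`SLCS_η` formulas, yet `A ⊨ γ(red, true)` while `ABC ⊭ γ(red, true)`. -/
theorem triangle_A_ABC :
    (∀ Φ : SLCSe Col, satE triVal Φ cellA ↔ satE triVal Φ cellABC) ∧
    satG triVal (SLCSg.gamma (SLCSg.prop Col.red) gTrue) cellA ∧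
    ¬ satG triVal (SLCSg.gamma (SLCSg.prop Col.red) gTrue) cellABC := by
  have hV : ∀ p (w w' : TriCell), (w.1.card = 2) = (w'.1.card = 2) →
      (w ∈ triVal p ↔ w' ∈ triVal p) := by
    rintro (_ | _) w w' h
    · exact Iff.of_eq h
    · exact not_congr (Iff.of_eq h)
  refine ⟨fun Φ => satE_congr_of_exists_pmPath triVal _ hV triangle_exists_pmPath_colour Φ
    cellA cellABC (propext (iff_of_false (by decide) (by decide))), ?_, ?_⟩
  · exact satG_gamma_of_le (v := ⟨{0, 1}, by simp⟩) (by decide)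
      (show ({0, 1} : Finset (Fin 3)).card = 2 by decide) (satG_gTrue _)
  · exact not_satG_gamma_of_isMax (fun v _ => le_cellABC v)
      (show ({0, 1, 2} : Finset (Fin 3)).card ≠ 2 by decide)
end

section
/- Given a polyhedral model 𝒫 = (|K|, V) with cell poset model 𝔽(𝒫) = (W, ≼, 𝒱): for every ↓-path π : [0;ℓ] → W there exists a topological path π' : [0,1] → |K| such that (i) 𝔽(π'(0)) = π(0), (ii) 𝔽(π'(1)) = π(ℓ), and (iii) for every r ∈ (0,1) there is i < ℓ with 𝔽(π'(r)) = π(i). -/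
open Geometry unitInterval

/-- The elements of the cell poset of a simplicial complex `K`: its faces
(identified with their open cells). -/
abbrev Faces {m : ℕ} (K : SimplicialComplex ℝ (EuclideanSpace ℝ (Fin m))) :
    Type _ :=
  {s : Finset (EuclideanSpace ℝ (Fin m)) // s ∈ K.faces}

/-- The order of the cell poset: `s₁ ≼ s₂` iff the cell of `s₁` is contained
in the topological closure of the cell of `s₂`. -/
def cellLE {m : ℕ} {K : SimplicialComplex ℝ (EuclideanSpace ℝ (Fin m))}
    (s₁ s₂ : Faces K) : Prop :=
  cellOf s₁.1 ⊆ closure (cellOf s₂.1)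

/-- A `↓`-path of length `ℓ ≥ 1` in the cell poset: consecutive cells are
comparable, and the final step goes downwards. -/
def cellDownPath {m : ℕ} {K : SimplicialComplex ℝ (EuclideanSpace ℝ (Fin m))}
    (π : ℕ → Faces K) (ℓ : ℕ) : Prop :=
  1 ≤ ℓ ∧ (∀ i < ℓ, cellLE (π i) (π (i + 1)) ∨ cellLE (π (i + 1)) (π i)) ∧
    cellLE (π ℓ) (π (ℓ - 1))

/-!
If `t ≼ s`, the segment from a point of the open cell of `s` to a point of the cell of `t` stays
in the open cell of `s` except at its endpoint, since the cell of `t` lies in the closed simplex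
of `s`. Joining consecutive cells of `π 0, …, π (ℓ - 1)` by such segments and ending with the
downward segment into `π ℓ` gives the path: the last segment meets `π ℓ` only at time `1`.
Distinct faces of a simplicial complex have disjoint open cells, so `F` is determined by the
cell containing each point.
-/

open Set Filter Topology AffineMap

section IntrinsicInterior

variable {E : Type*} [NormedAddCommGroup E] [NormedSpace ℝ E] {C : Set E} {x y : E}

theorem Convex.lineMap_mem_intrinsicInterior (hC : Convex ℝ C)
    (hx : x ∈ intrinsicInterior ℝ C) (hy : y ∈ C) {t : ℝ} (ht₀ : 0 ≤ t) (ht₁ : t < 1) :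
    lineMap x y t ∈ intrinsicInterior ℝ C := by
  obtain ⟨x', hx', rfl⟩ := hx
  have hyA : y ∈ affineSpan ℝ C := subset_affineSpan ℝ C hy
  have hc : 1 - t ≠ 0 := by linarith
  -- The homothety `g` centred at `y` with ratio `(1 - t)⁻¹` sends `lineMap x y t` to `x`, and its
  -- inverse maps `C` into itself by convexity; so `g` pulls a neighbourhood of `x` back into `C`.
  let g : affineSpan ℝ C → affineSpan ℝ C :=
    fun z => ⟨lineMap y (z : E) (1 - t)⁻¹, AffineMap.lineMap_mem _ hyA z.2⟩
  have hg : Continuous g := by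
    refine Continuous.subtype_mk ?_ _
    simp only [lineMap_apply_module]
    fun_prop
  let w : affineSpan ℝ C := ⟨lineMap (x' : E) y t, AffineMap.lineMap_mem _ x'.2 hyA⟩
  have hgw : g w = x' := by
    ext
    change lineMap y (lineMap (x' : E) y t) (1 - t)⁻¹ = x'
    rw [← lineMap_apply_one_sub y _ t]
    simp only [← homothety_eq_lineMap, ← homothety_mul_apply, inv_mul_cancel₀ hc, homothety_one,
      id_apply]
  have hgC : g ⁻¹' interior ((↑) ⁻¹' C) ⊆ (↑) ⁻¹' C := fun z hz => by
    have : lineMap y (g z : E) (1 - t) = z := by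
      simp only [g, ← homothety_eq_lineMap, ← homothety_mul_apply, mul_inv_cancel₀ hc,
        homothety_one, id_apply]
    rw [mem_preimage, ← this]
    exact hC.lineMap_mem hy (interior_subset hz : g z ∈ (↑) ⁻¹' C) ⟨by linarith, by linarith⟩
  refine ⟨w, interior_maximal hgC (isOpen_interior.preimage hg) ?_, rfl⟩
  simpa [mem_preimage, hgw]

theorem eventually_lineMap_mem_of_mem_intrinsicInterior (hx : x ∈ intrinsicInterior ℝ C)
    {p : E} (hp : p ∈ affineSpan ℝ C) : ∀ᶠ t : ℝ in 𝓝 1, lineMap p x t ∈ C := by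
  obtain ⟨x', hx', rfl⟩ := hx
  let f : ℝ → affineSpan ℝ C :=
    fun t => ⟨lineMap p (x' : E) t, AffineMap.lineMap_mem _ hp x'.2⟩
  have hf : Continuous f := AffineMap.lineMap_continuous.subtype_mk _
  have hf1 : f 1 = x' := by ext; simp [f]
  have hf' := hf.continuousAt.preimage_mem_nhds (hf1 ▸ isOpen_interior.mem_nhds hx')
  filter_upwards [hf'] with t ht using (interior_subset ht : f t ∈ (↑) ⁻¹' C)

theorem AffineIndependent.subset_of_mem_intrinsicInterior_of_mem_convexHull {s r : Finset E}
    (hs : AffineIndependent ℝ ((↑) : s → E)) (hrs : r ⊆ s)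
    (hx : x ∈ intrinsicInterior ℝ (convexHull ℝ (s : Set E)))
    (hxr : x ∈ convexHull ℝ (r : Set E)) : s ⊆ r := by
  classical
  intro v hv
  by_contra hvr
  have hvA : v ∈ affineSpan ℝ (convexHull ℝ (s : Set E)) := by
    rw [affineSpan_convexHull]; exact subset_affineSpan ℝ _ hv
  -- Push `x` slightly beyond itself, away from `v`: the barycentric coordinate of `v` in the
  -- resulting point of `convexHull s` would be negative.
  obtain ⟨t, hyt, ht⟩ := (((eventually_lineMap_mem_of_mem_intrinsicInterior hx hvA).filter_mono
    nhdsWithin_le_nhds).and (self_mem_nhdsWithin (s := Ioi 1))).exists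
  rw [Finset.mem_convexHull'] at hyt hxr
  obtain ⟨u, hu₀, hu₁, huy⟩ := hyt
  obtain ⟨w, -, hw₁, hwx⟩ := hxr
  set W : E → ℝ := fun i => if i ∈ r then w i else 0
  have hW₁ : ∑ i ∈ s, W i = 1 := by
    simp [W, Finset.sum_ite_mem, Finset.inter_eq_right.2 hrs, hw₁]
  have hWx : ∑ i ∈ s, W i • i = x := by
    simp [W, ite_smul, Finset.sum_ite_mem, Finset.inter_eq_right.2 hrs, hwx]
  have key := hs.eq_of_sum_eq_sum_subtype (w₁ := u)
    (w₂ := fun i => t * W i + if i = v then 1 - t else 0) ?_ ?_ v hv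
  · simp only [W, hvr, ↓reduceIte, mul_zero, zero_add] at key
    linarith [hu₀ v hv, ht]
  · simp [Finset.sum_add_distrib, ← Finset.mul_sum, hW₁, hu₁, hv]
  · simp only [huy, lineMap_apply_module, add_smul, mul_smul, ite_smul, zero_smul,
      Finset.sum_add_distrib, ← Finset.smul_sum, hWx, Finset.sum_ite_eq', hv, ↓reduceIte]
    module

end IntrinsicInterior

theorem Path.trans_apply_mem_of_lt_one {X : Type*} [TopologicalSpace X] {x y z : X} {S : Set X}
    {γ₁ : Path x y} {γ₂ : Path y z} (h₁ : ∀ r, γ₁ r ∈ S)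
    (h₂ : ∀ r : unitInterval, (r : ℝ) < 1 → γ₂ r ∈ S)
    {r : unitInterval} (hr : (r : ℝ) < 1) : γ₁.trans γ₂ r ∈ S := by
  rw [Path.trans_apply]
  split_ifs with h
  · exact h₁ _
  · exact h₂ _ (show 2 * (r : ℝ) - 1 < 1 by linarith)

section Cells

variable {m : ℕ}

theorem cellOf_nonempty {s : Finset (EuclideanSpace ℝ (Fin m))} (hs : s.Nonempty) :
    (cellOf s).Nonempty :=
  (Finset.coe_nonempty.2 hs).convexHull (𝕜 := ℝ) |>.intrinsicInterior (convex_convexHull ℝ _)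

theorem closure_cellOf_subset_convexHull (s : Finset (EuclideanSpace ℝ (Fin m))) :
    closure (cellOf s) ⊆ convexHull ℝ (s : Set (EuclideanSpace ℝ (Fin m))) :=
  closure_minimal intrinsicInterior_subset (s.finite_toSet.isClosed_convexHull (𝕜 := ℝ))

variable {K : SimplicialComplex ℝ (EuclideanSpace ℝ (Fin m))}

theorem cellOf_subset_space {s : Finset (EuclideanSpace ℝ (Fin m))} (hs : s ∈ K.faces) :
    cellOf s ⊆ K.space :=
  intrinsicInterior_subset.trans (K.convexHull_subset_space hs)

theorem eq_of_mem_cellOf_of_mem_cellOf {s t : Finset (EuclideanSpace ℝ (Fin m))}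
    (hs : s ∈ K.faces) (ht : t ∈ K.faces) {x : EuclideanSpace ℝ (Fin m)} (hxs : x ∈ cellOf s)
    (hxt : x ∈ cellOf t) : s = t := by
  have hx := K.inter_subset_convexHull hs ht
    ⟨intrinsicInterior_subset hxs, intrinsicInterior_subset hxt⟩
  have hst := (K.indep hs).subset_of_mem_intrinsicInterior_of_mem_convexHull
    Finset.inter_subset_left hxs (by rwa [Finset.coe_inter])
  have hts := (K.indep ht).subset_of_mem_intrinsicInterior_of_mem_convexHull
    Finset.inter_subset_right hxt (by rwa [Finset.coe_inter])
  exact (hst.trans Finset.inter_subset_right).antisymm (hts.trans Finset.inter_subset_left)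

theorem eq_of_mem_cellOf (F : {x : EuclideanSpace ℝ (Fin m) // x ∈ K.space} → Faces K)
    (hF : ∀ x, (x : EuclideanSpace ℝ (Fin m)) ∈ cellOf (F x).1)
    {x : {x : EuclideanSpace ℝ (Fin m) // x ∈ K.space}} {s : Faces K}
    (hx : (x : EuclideanSpace ℝ (Fin m)) ∈ cellOf s.1) : F x = s :=
  Subtype.ext (eq_of_mem_cellOf_of_mem_cellOf (F x).2 s.2 (hF x) hx)

variable {s t : Faces K} {a b : EuclideanSpace ℝ (Fin m)}

theorem lineMap_mem_cellOf_of_cellLE (hts : cellLE t s) (ha : a ∈ cellOf s.1)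
    (hb : b ∈ cellOf t.1) {r : ℝ} (hr₀ : 0 ≤ r) (hr₁ : r < 1) : lineMap a b r ∈ cellOf s.1 :=
  (convex_convexHull ℝ _).lineMap_mem_intrinsicInterior ha
    (closure_cellOf_subset_convexHull _ (hts hb)) hr₀ hr₁

theorem joinedIn_cellOf_union_of_cellLE (hts : cellLE t s) (ha : a ∈ cellOf s.1)
    (hb : b ∈ cellOf t.1) : JoinedIn (cellOf s.1 ∪ cellOf t.1) a b := by
  refine ⟨Path.segment a b, fun r => ?_⟩
  rcases r.2.2.lt_or_eq with hr | hr
  · exact Or.inl (lineMap_mem_cellOf_of_cellLE hts ha hb r.2.1 hr)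
  · simp [hr, hb]

theorem joinedIn_cellOf_union_of_comparable (h : cellLE s t ∨ cellLE t s) (ha : a ∈ cellOf s.1)
    (hb : b ∈ cellOf t.1) : JoinedIn (cellOf s.1 ∪ cellOf t.1) a b := by
  rcases h with h | h
  · rw [union_comm]
    exact (joinedIn_cellOf_union_of_cellLE h hb ha).symm
  · exact joinedIn_cellOf_union_of_cellLE h ha hb

theorem exists_joinedIn_iUnion_cellOf {π : ℕ → Faces K} {n : ℕ}
    (hπ : ∀ i < n, cellLE (π i) (π (i + 1)) ∨ cellLE (π (i + 1)) (π i))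
    (ha : a ∈ cellOf (π 0).1) :
    ∃ b ∈ cellOf (π n).1, JoinedIn (⋃ i ≤ n, cellOf (π i).1) a b := by
  induction n with
  | zero => exact ⟨a, ha, JoinedIn.refl (mem_iUnion₂.2 ⟨0, le_rfl, ha⟩)⟩
  | succ n ih =>
    obtain ⟨b, hb, hab⟩ := ih fun i hi => hπ i (by omega)
    obtain ⟨c, hc⟩ := cellOf_nonempty (K.nonempty_of_mem_faces (π (n + 1)).2)
    refine ⟨c, hc, (hab.mono ?_).trans
      ((joinedIn_cellOf_union_of_comparable (hπ n n.lt_succ_self) hb hc).mono ?_)⟩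
    · exact iUnion₂_mono' fun i hi => ⟨i, by omega, subset_rfl⟩
    · exact union_subset (subset_iUnion₂_of_subset n n.le_succ subset_rfl)
        (subset_iUnion₂_of_subset (n + 1) le_rfl subset_rfl)

end Cells

/-- Every `↓`-path in the cell poset of a simplicial complex is realised by a
topological path in the polyhedron: the endpoints map to the endpoints of the
`↓`-path, and every intermediate point lies in one of the non-final cells of
the `↓`-path. -/
theorem downPath_realised_by_topological_path {m : ℕ}
    (K : SimplicialComplex ℝ (EuclideanSpace ℝ (Fin m)))
    (F : {x : EuclideanSpace ℝ (Fin m) // x ∈ K.space} → Faces K)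
    (hF : ∀ x, (x : EuclideanSpace ℝ (Fin m)) ∈ cellOf (F x).1)
    (π : ℕ → Faces K) (ℓ : ℕ) (hπ : cellDownPath π ℓ) :
    ∃ π' : unitInterval → {x : EuclideanSpace ℝ (Fin m) // x ∈ K.space},
      Continuous π' ∧ F (π' 0) = π 0 ∧ F (π' 1) = π ℓ ∧
      ∀ r : unitInterval, 0 < (r : ℝ) → (r : ℝ) < 1 →
        ∃ i < ℓ, F (π' r) = π i := by
  obtain ⟨hℓ, hchain, hdown⟩ := hπ
  obtain ⟨a, ha⟩ := cellOf_nonempty (K.nonempty_of_mem_faces (π 0).2)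
  obtain ⟨b, hb, γ, hγ⟩ :=
    exists_joinedIn_iUnion_cellOf (n := ℓ - 1) (fun i hi => hchain i (by omega)) ha
  obtain ⟨c, hc⟩ := cellOf_nonempty (K.nonempty_of_mem_faces (π ℓ).2)
  let δ := γ.trans (Path.segment b c)
  have hδ : ∀ r : unitInterval, (r : ℝ) < 1 → δ r ∈ ⋃ i ≤ ℓ - 1, cellOf (π i).1 :=
    fun r hr => Path.trans_apply_mem_of_lt_one hγ (fun r hr => mem_iUnion₂.2
      ⟨ℓ - 1, le_rfl, lineMap_mem_cellOf_of_cellLE hdown hb hc r.2.1 hr⟩) hr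
  have hδK : ∀ r, δ r ∈ K.space := by
    intro r
    rcases r.2.2.lt_or_eq with hr | hr
    · obtain ⟨i, -, hi⟩ := mem_iUnion₂.1 (hδ r hr)
      exact cellOf_subset_space (π i).2 hi
    · simpa [show r = 1 from Subtype.ext hr] using cellOf_subset_space (π ℓ).2 hc
  refine ⟨fun r => ⟨δ r, hδK r⟩, by fun_prop, eq_of_mem_cellOf F hF (by simpa [δ] using ha),
    eq_of_mem_cellOf F hF (by simpa [δ] using hc), fun r _ hr => ?_⟩
  obtain ⟨i, hi, hδi⟩ := mem_iUnion₂.1 (hδ r hr)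
  exact ⟨i, by omega, eq_of_mem_cellOf F hF hδi⟩
end
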